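/- Let X and Y be real normed vector spaces with X infinite-dimensional, let T : X → Y be a bounded linear operator, and let E be a dense linear subspace of X. Then ∇(T|_E) ≤ ∇(T). -/

import Mathlib

/-- `inf_{m ∈ S_M} ‖Tm‖`, the infimum of `‖Tm‖` over the unit sphere of a subspace `M`. -/
noncomputable def sphereInf {X Y : Type*} [NormedAddCommGroup X] [NormedSpace ℝ X]
    [NormedAddCommGroup Y] [NormedSpace ℝ Y] (T : X →L[ℝ] Y) (M : Submodule ℝ X) : ℝ :=
  sInf {s : ℝ | ∃ m : X, m ∈ M ∧ ‖m‖ = 1 ∧ s = ‖T m‖}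

/-- `τ(T) = sup_{M ∈ I(X)} inf_{m ∈ S_M} ‖Tm‖`. -/
noncomputable def opTau {X Y : Type*} [NormedAddCommGroup X] [NormedSpace ℝ X]
    [NormedAddCommGroup Y] [NormedSpace ℝ Y] (T : X →L[ℝ] Y) : ℝ :=
  sSup {r : ℝ | ∃ M : Submodule ℝ X, ¬ FiniteDimensional ℝ M ∧ r = sphereInf T M}

/-- `∇(T) = inf_{M ∈ I(X)} τ(T|_M)`. -/
noncomputable def opNabla {X Y : Type*} [NormedAddCommGroup X] [NormedSpace ℝ X]
    [NormedAddCommGroup Y] [NormedSpace ℝ Y] (T : X →L[ℝ] Y) : ℝ :=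
  sInf {r : ℝ | ∃ M : Submodule ℝ X, ¬ FiniteDimensional ℝ M ∧
    r = opTau (T.comp M.subtypeL)}

/-!
Fix an infinite-dimensional `M ≤ X` and `ε > 0`. Inside `M` there is a biorthogonal sequence
`(xₙ, fₙ)` with continuous `fₙ`; by density pick `eₙ ∈ E` with `‖fₙ‖ ‖eₙ - xₙ‖ ≤ η / 2ⁿ⁺¹`.
Since the coefficients of `w = ∑ cₙ xₙ` are `cₙ = fₙ w`, the linear map `xₙ ↦ eₙ` moves `w` by
at most `η ‖w‖`. Hence for every infinite-dimensional `W ≤ N := span {eₙ} ≤ E` its preimage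
`V ≤ M` is infinite-dimensional and each unit vector of `V` is `2η`-close to a unit vector of `W`,
so `inf_{S_W} ‖T·‖ ≤ inf_{S_V} ‖T·‖ + 2η ‖T‖ ≤ τ(T|_M) + ε`. Thus `∇(T|_E) ≤ τ(T|_N) ≤ τ(T|_M) + ε`.
-/

theorem Submodule.not_finiteDimensional_map {K V W : Type*} [Field K] [AddCommGroup V]
    [Module K V] [AddCommGroup W] [Module K W] {f : V →ₗ[K] W} (hf : Function.Injective f)
    {p : Submodule K V} (hp : ¬ FiniteDimensional K p) : ¬ FiniteDimensional K (p.map f) :=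
  fun _ => hp (Submodule.equivMapOfInjective f hf p).symm.finiteDimensional

theorem Submodule.not_finiteDimensional_map_comap {K Z V : Type*} [Field K] [AddCommGroup Z]
    [Module K Z] [AddCommGroup V] [Module K V] {A B : Z →ₗ[K] V} (hA : Function.Injective A)
    {W : Submodule K V} (hWB : W ≤ LinearMap.range B) (hW : ¬ FiniteDimensional K W) :
    ¬ FiniteDimensional K ((W.comap B).map A) := by
  refine Submodule.not_finiteDimensional_map hA fun _ => hW ?_
  rw [← Submodule.map_comap_eq_self hWB]
  infer_instance

theorem Submodule.exists_mem_ker_notMem {K V W : Type*} [Field K] [AddCommGroup V] [Module K V]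
    [AddCommGroup W] [Module K W] [FiniteDimensional K W] {M F : Submodule K V}
    (hM : ¬ FiniteDimensional K M) [FiniteDimensional K F] (φ : V →ₗ[K] W) :
    ∃ y ∈ M, φ y = 0 ∧ y ∉ F := by
  by_contra! h
  have hle : M ⊓ LinearMap.ker φ ≤ F := fun y hy => h y hy.1 hy.2
  refine hM (Module.Finite.iff_fg.mpr (Submodule.fg_of_fg_map_of_fg_inf_ker φ ?_ ?_))
  · exact Module.Finite.iff_fg.mp inferInstance
  · exact Module.Finite.iff_fg.mp (Submodule.finiteDimensional_of_le hle)

theorem LinearMap.not_finiteDimensional_range_finsupp {K V ι : Type*} [Field K] [AddCommGroup V]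
    [Module K V] [Infinite ι] {B : (ι →₀ K) →ₗ[K] V} (hB : Function.Injective B) :
    ¬ FiniteDimensional K (LinearMap.range B) := fun _ => by
  have := (LinearEquiv.ofInjective B hB).symm.finiteDimensional
  have := Module.Finite.finite_basis (Finsupp.basisSingleOne (R := K) (ι := ι))
  exact not_finite ι

theorem Dense.exists_mem_mul_norm_sub_le {X : Type*} [SeminormedAddCommGroup X] {s : Set X}
    (hs : Dense s) (x : X) {K r : ℝ} (hK : 0 ≤ K) (hr : 0 < r) : ∃ e ∈ s, K * ‖e - x‖ ≤ r := by
  obtain ⟨e, he, hdist⟩ := hs.exists_dist_lt x (ε := r / (K + 1)) (by positivity)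
  refine ⟨e, he, ?_⟩
  rw [dist_eq_norm', lt_div_iff₀ (by positivity)] at hdist
  nlinarith [norm_nonneg (e - x)]

theorem exists_dual_eq_one_of_notMem {𝕜 X : Type*} [RCLike 𝕜] [NormedAddCommGroup X]
    [NormedSpace 𝕜 X] {F : Submodule 𝕜 X} (hF : IsClosed (F : Set X)) {x : X}
    (hx : x ∉ F) : ∃ g : StrongDual 𝕜 X, g x = 1 ∧ ∀ y ∈ F, g y = 0 := by
  have := hF -- so that `X ⧸ F` is Hausdorff and its continuous functionals separate points
  obtain ⟨g, hg⟩ := SeparatingDual.exists_eq_one (R := 𝕜) (x := F.mkQ x)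
    (by simpa [Submodule.Quotient.mk_eq_zero] using hx)
  exact ⟨g.comp F.mkQL, hg, fun y hy => by simp [(Submodule.Quotient.mk_eq_zero F).mpr hy]⟩

section Perturbation

variable {X : Type*} [NormedAddCommGroup X] [NormedSpace ℝ X]

theorem exists_biorthogonal_seq {M : Submodule ℝ X} (hM : ¬ FiniteDimensional ℝ M) :
    ∃ (x : ℕ → X) (f : ℕ → StrongDual ℝ X),
      (∀ n, x n ∈ M) ∧ ∀ i j, f i (x j) = if i = j then 1 else 0 := by
  let r : X × StrongDual ℝ X → X × StrongDual ℝ X → Prop :=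
    fun p q => p.2 q.1 = 0 ∧ q.2 p.1 = 0
  have : Std.Symm r := ⟨fun _ _ h => h.symm⟩
  obtain ⟨p, hpM, hp⟩ := exists_seq_of_forall_finset_exists' (fun q => q.1 ∈ M ∧ q.2 q.1 = 1) r
    (fun s _ => by
      let φ : X →ₗ[ℝ] (s → ℝ) := LinearMap.pi fun q => (q.1.2 : X →ₗ[ℝ] ℝ)
      let F := Submodule.span ℝ (Prod.fst '' (s : Set (X × StrongDual ℝ X)))
      have : FiniteDimensional ℝ F :=
        Module.Finite.span_of_finite ℝ ((s.finite_toSet).image _)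
      obtain ⟨y, hyM, hφy, hyF⟩ := Submodule.exists_mem_ker_notMem (F := F) hM φ
      obtain ⟨g, hgy, hgF⟩ := exists_dual_eq_one_of_notMem F.closed_of_finiteDimensional hyF
      refine ⟨(y, g), ⟨hyM, hgy⟩, fun q hq => ⟨congr_fun hφy ⟨q, hq⟩, hgF _ ?_⟩⟩
      exact Submodule.subset_span ⟨q, hq, rfl⟩)
  refine ⟨fun n => (p n).1, fun n => (p n).2, fun n => (hpM n).1, fun i j => ?_⟩
  split_ifs with hij
  · subst hij; exact (hpM i).2
  · exact (hp hij).1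

theorem norm_inv_norm_smul_sub_le {m v : X} (hm : ‖m‖ = 1) :
    ‖‖v‖⁻¹ • v - m‖ ≤ 2 * ‖v - m‖ := by
  rcases eq_or_ne v 0 with rfl | hv
  · simp [hm]
  have hnorm : ‖‖v‖⁻¹ • v - v‖ = |1 - ‖v‖| := calc
    ‖‖v‖⁻¹ • v - v‖ = |(‖v‖⁻¹ - 1) * ‖v‖| := by
      rw [abs_mul, abs_norm, ← Real.norm_eq_abs, ← norm_smul, sub_smul, one_smul]
    _ = |1 - ‖v‖| := by rw [sub_mul, inv_mul_cancel₀ (norm_ne_zero_iff.mpr hv), one_mul]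
  calc ‖‖v‖⁻¹ • v - m‖ ≤ ‖‖v‖⁻¹ • v - v‖ + ‖v - m‖ := norm_sub_le_norm_sub_add_norm_sub _ _ _
    _ ≤ ‖v - m‖ + ‖v - m‖ := by
      rw [hnorm, ← hm, norm_sub_rev v m]
      gcongr
      exact abs_norm_sub_norm_le m v
    _ = 2 * ‖v - m‖ := by ring

theorem exists_unit_near_of_norm_sub_le {Z : Type*} [AddCommGroup Z] [Module ℝ Z]
    {A B : Z →ₗ[ℝ] X} {η : ℝ} (hη : η < 1) (hAB : ∀ z, ‖B z - A z‖ ≤ η * ‖A z‖)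
    {W : Submodule ℝ X} {m : X} (hm : m ∈ (W.comap B).map A) (hm1 : ‖m‖ = 1) :
    ∃ u ∈ W, ‖u‖ = 1 ∧ ‖u - m‖ ≤ 2 * η := by
  obtain ⟨z, hz, rfl⟩ := hm
  have hBz : ‖B z - A z‖ ≤ η := by simpa [hm1] using hAB z
  have hBz0 : B z ≠ 0 := by
    rintro h
    rw [h, zero_sub, norm_neg, hm1] at hBz
    linarith
  refine ⟨‖B z‖⁻¹ • B z, W.smul_mem _ hz, norm_smul_inv_norm hBz0, ?_⟩
  linarith [norm_inv_norm_smul_sub_le (v := B z) hm1]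

theorem apply_linearCombination_of_biorthogonal {x : ℕ → X} {f : ℕ → StrongDual ℝ X}
    (hfx : ∀ i j, f i (x j) = if i = j then 1 else 0) (c : ℕ →₀ ℝ) (i : ℕ) :
    f i (Finsupp.linearCombination ℝ x c) = c i := by
  simp [Finsupp.linearCombination_apply, map_finsuppSum, hfx, eq_comm]

theorem norm_linearCombination_sub_le {x e : ℕ → X} {f : ℕ → StrongDual ℝ X}
    (hfx : ∀ i j, f i (x j) = if i = j then 1 else 0) {η : ℝ}
    (he : ∀ n, ‖f n‖ * ‖e n - x n‖ ≤ η / 2 / 2 ^ n) (c : ℕ →₀ ℝ) :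
    ‖Finsupp.linearCombination ℝ e c - Finsupp.linearCombination ℝ x c‖ ≤
      η * ‖Finsupp.linearCombination ℝ x c‖ := by
  set a := ‖Finsupp.linearCombination ℝ x c‖
  have hη : 0 ≤ η := by linarith [he 0, mul_nonneg (norm_nonneg (f 0)) (norm_nonneg (e 0 - x 0))]
  have hterm : ∀ n, ‖c n‖ * ‖e n - x n‖ ≤ a * (η / 2 / 2 ^ n) := fun n => calc
    ‖c n‖ * ‖e n - x n‖ ≤ ‖f n‖ * a * ‖e n - x n‖ := by
      rw [← apply_linearCombination_of_biorthogonal hfx c n]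
      gcongr
      exact (f n).le_opNorm _
    _ ≤ a * (η / 2 / 2 ^ n) := by rw [mul_comm ‖f n‖, mul_assoc]; gcongr; exact he n
  calc ‖Finsupp.linearCombination ℝ e c - Finsupp.linearCombination ℝ x c‖
      = ‖∑ n ∈ c.support, c n • (e n - x n)‖ := by
        simp [Finsupp.linearCombination_apply, Finsupp.sum, smul_sub]
    _ ≤ ∑ n ∈ c.support, a * (η / 2 / 2 ^ n) :=
        (norm_sum_le _ _).trans (Finset.sum_le_sum fun n _ => (norm_smul _ _).trans_le (hterm n))
    _ ≤ η * a := by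
        rw [← Finset.mul_sum, mul_comm η]
        gcongr
        exact ((summable_geometric_two' η).sum_le_tsum _ fun n _ => by positivity).trans_eq
          (tsum_geometric_two' η)

theorem injective_of_norm_sub_le {Z : Type*} [AddCommGroup Z] [Module ℝ Z] {A B : Z →ₗ[ℝ] X}
    (hA : Function.Injective A) {η : ℝ} (hη : η < 1) (hAB : ∀ z, ‖B z - A z‖ ≤ η * ‖A z‖) :
    Function.Injective B := by
  refine (injective_iff_map_eq_zero B).mpr fun z hz => hA ?_
  have h := hAB z
  rw [hz, zero_sub, norm_neg] at h
  rw [map_zero, ← norm_le_zero_iff]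
  nlinarith [norm_nonneg (A z)]

theorem exists_subspace_near_of_dense {M E : Submodule ℝ X} (hM : ¬ FiniteDimensional ℝ M)
    (hE : Dense (E : Set X)) {δ : ℝ} (hδ : 0 < δ) :
    ∃ N ≤ E, ¬ FiniteDimensional ℝ N ∧ ∀ W ≤ N, ¬ FiniteDimensional ℝ W →
      ∃ V ≤ M, ¬ FiniteDimensional ℝ V ∧
        ∀ m ∈ V, ‖m‖ = 1 → ∃ u ∈ W, ‖u‖ = 1 ∧ ‖u - m‖ ≤ δ := by
  obtain ⟨x, f, hxM, hfx⟩ := exists_biorthogonal_seq hM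
  set η := min (δ / 2) (1 / 2)
  have hη : 0 < η := by positivity
  choose e heE he using fun n =>
    hE.exists_mem_mul_norm_sub_le (x n) (norm_nonneg (f n)) (r := η / 2 / 2 ^ n) (by positivity)
  set A := Finsupp.linearCombination ℝ x
  set B := Finsupp.linearCombination ℝ e
  have hAB := norm_linearCombination_sub_le hfx he
  have hA : Function.Injective A := fun c c' h => Finsupp.ext fun i => by
    rw [← apply_linearCombination_of_biorthogonal hfx c,
      ← apply_linearCombination_of_biorthogonal hfx c', h]
  have hη1 : η < 1 := by linarith [min_le_right (δ / 2) (1 / 2)]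
  refine ⟨LinearMap.range B, ?_, LinearMap.not_finiteDimensional_range_finsupp
    (injective_of_norm_sub_le hA hη1 hAB), fun W hWB hW => ⟨(W.comap B).map A, ?_,
      Submodule.not_finiteDimensional_map_comap hA hWB hW, fun m hm hm1 => ?_⟩⟩
  · rw [Finsupp.range_linearCombination, Submodule.span_le]
    rintro _ ⟨n, rfl⟩
    exact heE n
  · refine (Submodule.map_mono le_top).trans ?_
    rw [Submodule.map_top, Finsupp.range_linearCombination, Submodule.span_le]
    rintro _ ⟨n, rfl⟩
    exact hxM n
  · obtain ⟨u, hu, hu1, hum⟩ := exists_unit_near_of_norm_sub_le hη1 hAB hm hm1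
    exact ⟨u, hu, hu1, hum.trans (by linarith [min_le_left (δ / 2) (1 / 2)])⟩

end Perturbation

section SphereInf

variable {X Y : Type*} [NormedAddCommGroup X] [NormedSpace ℝ X]
  [NormedAddCommGroup Y] [NormedSpace ℝ Y] (T : X →L[ℝ] Y)

theorem Submodule.exists_mem_norm_eq_one {V : Submodule ℝ X} (hV : ¬ FiniteDimensional ℝ V) :
    ∃ v ∈ V, ‖v‖ = 1 := by
  have : Nontrivial V := not_subsingleton_iff_nontrivial.mp fun _ => hV inferInstance
  obtain ⟨v, hv⟩ := exists_norm_eq V zero_le_one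
  exact ⟨v, v.2, hv⟩

theorem sphereInf_nonneg (V : Submodule ℝ X) : 0 ≤ sphereInf T V :=
  Real.sInf_nonneg (by rintro _ ⟨m, -, -, rfl⟩; positivity)

theorem sphereInf_le {V : Submodule ℝ X} {m : X} (hm : m ∈ V) (hm1 : ‖m‖ = 1) :
    sphereInf T V ≤ ‖T m‖ :=
  csInf_le ⟨0, by rintro _ ⟨m, -, -, rfl⟩; positivity⟩ ⟨m, hm, hm1, rfl⟩

theorem sphereInf_le_opNorm {V : Submodule ℝ X} (hV : ¬ FiniteDimensional ℝ V) :
    sphereInf T V ≤ ‖T‖ := by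
  obtain ⟨v, hv, hv1⟩ := V.exists_mem_norm_eq_one hV
  simpa [hv1] using (sphereInf_le T hv hv1).trans (T.le_opNorm v)

theorem sphereInf_le_add_of_forall_exists_near {V W : Submodule ℝ X}
    (hV : ¬ FiniteDimensional ℝ V) {δ : ℝ}
    (h : ∀ m ∈ V, ‖m‖ = 1 → ∃ u ∈ W, ‖u‖ = 1 ∧ ‖u - m‖ ≤ δ) :
    sphereInf T W ≤ sphereInf T V + ‖T‖ * δ := by
  obtain ⟨v, hv, hv1⟩ := V.exists_mem_norm_eq_one hV
  rw [← sub_le_iff_le_add]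
  refine le_csInf ⟨_, v, hv, hv1, rfl⟩ ?_
  rintro _ ⟨m, hm, hm1, rfl⟩
  obtain ⟨u, hu, hu1, hum⟩ := h m hm hm1
  have : ‖T u‖ ≤ ‖T m‖ + ‖T‖ * δ := calc
    ‖T u‖ ≤ ‖T m‖ + ‖T (u - m)‖ := by simpa using norm_le_norm_add_norm_sub' (T u) (T m)
    _ ≤ ‖T m‖ + ‖T‖ * δ := by gcongr; exact T.le_of_opNorm_le_of_le le_rfl hum
  linarith [sphereInf_le T hu hu1]

theorem sphereInf_comp_subtypeL (q : Submodule ℝ X) (V : Submodule ℝ q) :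
    sphereInf (T.comp q.subtypeL) V = sphereInf T (V.map q.subtype) := by
  unfold sphereInf
  congr 1
  ext s
  simp

theorem opTau_nonneg : 0 ≤ opTau T :=
  Real.sSup_nonneg (by rintro _ ⟨V, -, rfl⟩; exact sphereInf_nonneg T V)

theorem sphereInf_le_opTau_comp_subtypeL {q V : Submodule ℝ X} (hVq : V ≤ q)
    (hV : ¬ FiniteDimensional ℝ V) : sphereInf T V ≤ opTau (T.comp q.subtypeL) := by
  refine le_csSup ⟨‖T.comp q.subtypeL‖, ?_⟩ ⟨V.comap q.subtype, ?_, ?_⟩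
  · rintro _ ⟨W, hW, rfl⟩
    exact sphereInf_le_opNorm _ hW
  · exact fun _ => hV (Submodule.comapSubtypeEquivOfLe hVq).finiteDimensional
  · rw [sphereInf_comp_subtypeL, Submodule.map_comap_subtype, inf_eq_right.mpr hVq]

theorem opTau_comp_subtypeL_le {q : Submodule ℝ X} (hq : ¬ FiniteDimensional ℝ q) {b : ℝ}
    (h : ∀ V ≤ q, ¬ FiniteDimensional ℝ V → sphereInf T V ≤ b) :
    opTau (T.comp q.subtypeL) ≤ b := by
  refine csSup_le ⟨_, ⊤, fun _ => hq Submodule.topEquiv.finiteDimensional, rfl⟩ ?_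
  rintro _ ⟨V, hV, rfl⟩
  rw [sphereInf_comp_subtypeL]
  exact h _ (Submodule.map_subtype_le q V)
    (Submodule.not_finiteDimensional_map q.injective_subtype hV)

theorem opNabla_comp_subtypeL_le {E N : Submodule ℝ X} (hNE : N ≤ E)
    (hN : ¬ FiniteDimensional ℝ N) : opNabla (T.comp E.subtypeL) ≤ opTau (T.comp N.subtypeL) := by
  unfold opNabla
  have hN' : ¬ FiniteDimensional ℝ (N.comap E.subtype) :=
    fun _ => hN (Submodule.comapSubtypeEquivOfLe hNE).finiteDimensional
  refine le_trans (csInf_le ⟨0, ?_⟩ ⟨_, hN', rfl⟩)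
    (opTau_comp_subtypeL_le _ hN' fun V hV hVinf => ?_)
  · rintro _ ⟨_, -, rfl⟩
    exact opTau_nonneg _
  · rw [sphereInf_comp_subtypeL]
    refine sphereInf_le_opTau_comp_subtypeL T ?_
      (Submodule.not_finiteDimensional_map E.injective_subtype hVinf)
    simpa [Submodule.map_comap_subtype, inf_eq_right.mpr hNE] using
      Submodule.map_mono (f := E.subtype) hV

end SphereInf

/-- `∇(T|_E) ≤ ∇(T)` for any dense subspace `E`. -/
theorem nabla_restrict_le {X Y : Type*} [NormedAddCommGroup X] [NormedSpace ℝ X]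
    [NormedAddCommGroup Y] [NormedSpace ℝ Y] (hX : ¬ FiniteDimensional ℝ X)
    (T : X →L[ℝ] Y) (E : Submodule ℝ X) (hE : Dense (E : Set X)) :
    opNabla (T.comp E.subtypeL) ≤ opNabla T := by
  refine le_csInf ⟨_, ⊤, fun _ => hX Submodule.topEquiv.finiteDimensional, rfl⟩ ?_
  rintro _ ⟨M, hM, rfl⟩
  refine le_of_forall_pos_le_add fun ε hε => ?_
  have hδ : ‖T‖ * (ε / (‖T‖ + 1)) ≤ ε := by
    rw [mul_div_assoc', div_le_iff₀ (by positivity)]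
    nlinarith [norm_nonneg T]
  obtain ⟨N, hNE, hN, hNM⟩ :=
    exists_subspace_near_of_dense hM hE (δ := ε / (‖T‖ + 1)) (by positivity)
  refine (opNabla_comp_subtypeL_le T hNE hN).trans
    (opTau_comp_subtypeL_le T hN fun W hWN hW => ?_)
  obtain ⟨V, hVM, hV, hWV⟩ := hNM W hWN hW
  calc sphereInf T W ≤ sphereInf T V + ‖T‖ * (ε / (‖T‖ + 1)) :=
        sphereInf_le_add_of_forall_exists_near T hV hWV
    _ ≤ opTau (T.comp M.subtypeL) + ε :=
        add_le_add (sphereInf_le_opTau_comp_subtypeL T hVM hV) hδ
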